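/- arXiv:2404.05622 — 7 statements merged into one kernel-verified Lean document; each statement's English description precedes it below -/
import Mathlib

section
/- Let c be a random cluster drawn from the true clustering 𝒞 with probability proportional to positive weights p_c. Then the pairwise precision satisfies P = E[|c|(|c|−1−UCE(c))/p_c] / E[|c|(|c|−1+SDE(c))/p_c], provided the set of predicted matched pairs is nonempty. -/
open Finset Filter Topology

/-- A clustering (partition) of a finite type of records, given by the block
containing each record. -/
structure Clustering (R : Type*) [Fintype R] [DecidableEq R] where
  blk : R → Finset R
  mem_blk : ∀ r, r ∈ blk r
  blk_eq : ∀ r r', r' ∈ blk r → blk r' = blk r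

namespace Clustering

variable {R : Type*} [Fintype R] [DecidableEq R]

/-- The set of clusters (blocks) of the clustering. -/
def clusters (C : Clustering R) : Finset (Finset R) :=
  Finset.univ.image C.blk

/-- The set of unordered pairs of distinct records lying in the same block. -/
def pairs (C : Clustering R) : Set (Sym2 R) :=
  {s | ¬ s.IsDiag ∧ ∀ a b : R, s = s(a, b) → a ∈ C.blk b}

/-- Expectation of `f (c)` when a random cluster `c` is drawn from `C.clusters`
with probability proportional to the positive weights `p`. -/
noncomputable def expect (C : Clustering R) (p : Finset R → ℝ) (f : Finset R → ℝ) : ℝ :=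
  ∑ c ∈ C.clusters, (p c / ∑ c' ∈ C.clusters, p c') * f c

end Clustering

section Metrics

variable {R : Type*} [Fintype R] [DecidableEq R]

/-- Record-wise underclustering error `UCE(r) = |c(r) \ ĉ(r)|`. -/
noncomputable def UCE (C Ch : Clustering R) (r : R) : ℝ := ((C.blk r) \ (Ch.blk r)).card

/-- Record-wise overclustering error `OCE(r) = |ĉ(r) \ c(r)|`. -/
noncomputable def OCE (C Ch : Clustering R) (r : R) : ℝ := ((Ch.blk r) \ (C.blk r)).card

/-- Record-wise size difference error `SDE(r) = |ĉ(r)| - |c(r)|`. -/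
noncomputable def SDE (C Ch : Clustering R) (r : R) : ℝ :=
  ((Ch.blk r).card : ℝ) - ((C.blk r).card : ℝ)

/-- Record-wise relative overclustering error. -/
noncomputable def ROCE (C Ch : Clustering R) (r : R) : ℝ := OCE C Ch r / ((Ch.blk r).card : ℝ)

/-- Record-wise relative underclustering error. -/
noncomputable def RUCE (C Ch : Clustering R) (r : R) : ℝ := UCE C Ch r / ((C.blk r).card : ℝ)

/-- Record-wise error indicator. -/
noncomputable def EI (C Ch : Clustering R) (r : R) : ℝ := if Ch.blk r = C.blk r then 0 else 1

/-- Cluster-wise average of a record-wise error metric: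
`E(c) = (1/|c|) ∑_{r ∈ c} E(r)`. -/
noncomputable def clAvg (E : R → ℝ) (c : Finset R) : ℝ := (1 / (c.card : ℝ)) * ∑ r ∈ c, E r

end Metrics


namespace PPRaux

variable {R : Type*} [Fintype R] [DecidableEq R]

theorem blk_symm (C : Clustering R) {a b : R} (h : a ∈ C.blk b) : b ∈ C.blk a := by
  have := C.blk_eq b a h
  rw [this]; exact C.mem_blk b

/-- Graph whose edges are the pairs lying in the same block in both clusterings. -/
def blkGraph (C Ch : Clustering R) : SimpleGraph R where
  Adj a b := a ≠ b ∧ a ∈ C.blk b ∧ a ∈ Ch.blk b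
  symm := by
    constructor
    rintro a b ⟨h1, h2, h3⟩
    exact ⟨h1.symm, blk_symm C h2, blk_symm Ch h3⟩
  loopless := by constructor; rintro a ⟨h1, -⟩; exact h1 rfl

instance (C Ch : Clustering R) : DecidableRel (blkGraph C Ch).Adj :=
  fun a b => inferInstanceAs (Decidable (a ≠ b ∧ a ∈ C.blk b ∧ a ∈ Ch.blk b))

theorem edgeSet_blkGraph (C Ch : Clustering R) :
    (blkGraph C Ch).edgeSet = C.pairs ∩ Ch.pairs := by
  ext s
  induction s using Sym2.ind with
  | _ x y =>
    simp only [SimpleGraph.mem_edgeSet, Set.mem_inter_iff, Clustering.pairs, Set.mem_setOf_eq,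
      Sym2.mk_isDiag_iff]
    constructor
    · rintro ⟨h1, h2, h3⟩
      refine ⟨⟨h1, ?_⟩, h1, ?_⟩ <;>
      · intro a b hab
        rw [Sym2.eq_iff] at hab
        rcases hab with ⟨rfl, rfl⟩ | ⟨rfl, rfl⟩
        · first | exact h2 | exact h3
        · first | exact blk_symm C h2 | exact blk_symm Ch h3
    · rintro ⟨⟨h1, h2⟩, -, h3⟩
      exact ⟨h1, h2 x y rfl, h3 x y rfl⟩

theorem neighborFinset_blkGraph (C Ch : Clustering R) (v : R) :
    (blkGraph C Ch).neighborFinset v = (C.blk v ∩ Ch.blk v).erase v := by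
  ext u
  simp only [SimpleGraph.mem_neighborFinset, Finset.mem_erase, Finset.mem_inter]
  constructor
  · rintro ⟨h1, h2, h3⟩
    exact ⟨fun h => h1 h.symm, blk_symm C h2, blk_symm Ch h3⟩
  · rintro ⟨h1, h2, h3⟩
    exact ⟨fun h => h1 h.symm, blk_symm C h2, blk_symm Ch h3⟩

theorem degree_blkGraph (C Ch : Clustering R) (v : R) :
    ((blkGraph C Ch).degree v : ℝ) = ((C.blk v ∩ Ch.blk v).card : ℝ) - 1 := by
  rw [SimpleGraph.degree, neighborFinset_blkGraph]
  have hv : v ∈ C.blk v ∩ Ch.blk v := Finset.mem_inter.mpr ⟨C.mem_blk v, Ch.mem_blk v⟩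
  rw [Finset.card_erase_of_mem hv]
  have : 1 ≤ (C.blk v ∩ Ch.blk v).card := Finset.card_pos.mpr ⟨v, hv⟩
  push_cast [this]
  ring

theorem two_mul_ncard (C Ch : Clustering R) :
    2 * ((C.pairs ∩ Ch.pairs).ncard : ℝ) = ∑ v : R, (((C.blk v ∩ Ch.blk v).card : ℝ) - 1) := by
  have h := SimpleGraph.sum_degrees_eq_twice_card_edges (blkGraph C Ch)
  have hcard : (C.pairs ∩ Ch.pairs).ncard = (blkGraph C Ch).edgeFinset.card := by
    rw [← edgeSet_blkGraph, Set.ncard_eq_toFinset_card']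
    congr 1
  rw [hcard]
  have := congrArg (fun n : ℕ => (n : ℝ)) h
  push_cast at this
  rw [← this]
  exact Finset.sum_congr rfl fun v _ => degree_blkGraph C Ch v

theorem blk_eq_of_mem_cluster (C : Clustering R) {c : Finset R} (hc : c ∈ C.clusters)
    {r : R} (hr : r ∈ c) : C.blk r = c := by
  obtain ⟨r0, -, rfl⟩ := Finset.mem_image.mp hc
  exact C.blk_eq r0 r hr

theorem sum_clusters (C : Clustering R) (f : R → ℝ) :
    ∑ c ∈ C.clusters, ∑ r ∈ c, f r = ∑ r, f r := by
  rw [← Finset.sum_fiberwise_of_maps_to (g := C.blk) (t := C.clusters)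
    (fun r _ => Finset.mem_image_of_mem _ (Finset.mem_univ r)) f]
  refine Finset.sum_congr rfl fun c hc => Finset.sum_congr ?_ (fun _ _ => rfl)
  ext r
  simp only [Finset.mem_filter, Finset.mem_univ, true_and]
  constructor
  · intro hr; exact blk_eq_of_mem_cluster C hc hr
  · intro h; rw [← h]; exact C.mem_blk r

theorem cluster_nonempty (C : Clustering R) {c : Finset R} (hc : c ∈ C.clusters) : c.Nonempty := by
  obtain ⟨r0, -, rfl⟩ := Finset.mem_image.mp hc
  exact ⟨r0, C.mem_blk r0⟩

theorem num_term (C Ch : Clustering R) {c : Finset R} (hc : c ∈ C.clusters) :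
    (c.card : ℝ) * ((c.card : ℝ) - 1 - clAvg (UCE C Ch) c) =
      ∑ r ∈ c, (((C.blk r ∩ Ch.blk r).card : ℝ) - 1) := by
  have hcard : (c.card : ℝ) ≠ 0 :=
    Nat.cast_ne_zero.mpr (Finset.card_pos.mpr (cluster_nonempty C hc)).ne'
  have expand : (c.card : ℝ) * ((c.card : ℝ) - 1 - clAvg (UCE C Ch) c)
      = ∑ r ∈ c, ((c.card : ℝ) - 1 - UCE C Ch r) := by
    rw [Finset.sum_sub_distrib, Finset.sum_sub_distrib, Finset.sum_const, Finset.sum_const,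
      clAvg]
    field_simp
    ring
  rw [expand]
  refine Finset.sum_congr rfl fun r hr => ?_
  have hb : C.blk r = c := blk_eq_of_mem_cluster C hc hr
  have h2 : ((C.blk r ∩ Ch.blk r).card : ℝ) + ((C.blk r \ Ch.blk r).card : ℝ) = ((C.blk r).card : ℝ) := by
    exact_mod_cast congrArg (fun n : ℕ => (n : ℝ)) (Finset.card_inter_add_card_sdiff (C.blk r) (Ch.blk r))
  rw [UCE, ← hb]
  linarith

theorem den_term (C Ch : Clustering R) {c : Finset R} (hc : c ∈ C.clusters) :
    (c.card : ℝ) * ((c.card : ℝ) - 1 + clAvg (SDE C Ch) c) =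
      ∑ r ∈ c, (((Ch.blk r).card : ℝ) - 1) := by
  have hcard : (c.card : ℝ) ≠ 0 :=
    Nat.cast_ne_zero.mpr (Finset.card_pos.mpr (cluster_nonempty C hc)).ne'
  have expand : (c.card : ℝ) * ((c.card : ℝ) - 1 + clAvg (SDE C Ch) c)
      = ∑ r ∈ c, ((c.card : ℝ) - 1 + SDE C Ch r) := by
    rw [Finset.sum_add_distrib, Finset.sum_sub_distrib, Finset.sum_const, Finset.sum_const, clAvg]
    field_simp
    ring
  rw [expand]
  refine Finset.sum_congr rfl fun r hr => ?_
  have hb : C.blk r = c := blk_eq_of_mem_cluster C hc hr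
  rw [SDE, ← hb]
  ring

end PPRaux

open PPRaux in
/-- Lemma 1 (precision part): representation of pairwise precision. -/
theorem pairwise_precision_representation
    {R : Type*} [Fintype R] [DecidableEq R]
    (C Ch : Clustering R) (p : Finset R → ℝ)
    (hp : ∀ c ∈ C.clusters, 0 < p c)
    (hP : Ch.pairs.Nonempty) :
    ((C.pairs ∩ Ch.pairs).ncard : ℝ) / (Ch.pairs.ncard : ℝ) =
      C.expect p (fun c => (c.card : ℝ) * ((c.card : ℝ) - 1 - clAvg (UCE C Ch) c) / p c) /
        C.expect p (fun c => (c.card : ℝ) * ((c.card : ℝ) - 1 + clAvg (SDE C Ch) c) / p c) := by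
  classical
  obtain ⟨s0, hs0⟩ := hP
  have hR : Nonempty R := ⟨s0.out.1⟩
  have hclne : C.clusters.Nonempty := by
    obtain ⟨r⟩ := hR
    exact ⟨C.blk r, Finset.mem_image_of_mem _ (Finset.mem_univ r)⟩
  set S : ℝ := ∑ c' ∈ C.clusters, p c' with hS
  have hSpos : 0 < S := Finset.sum_pos hp hclne
  have hB : (0 : ℝ) < (Ch.pairs.ncard : ℝ) := by
    exact_mod_cast (Set.ncard_pos (Set.toFinite _)).mpr ⟨s0, hs0⟩
  have hnum : C.expect p (fun c => (c.card : ℝ) * ((c.card : ℝ) - 1 - clAvg (UCE C Ch) c) / p c)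
      = 2 * ((C.pairs ∩ Ch.pairs).ncard : ℝ) / S := by
    rw [Clustering.expect]
    have : ∀ c ∈ C.clusters, (p c / S) * ((c.card : ℝ) * ((c.card : ℝ) - 1 - clAvg (UCE C Ch) c) / p c)
        = (∑ r ∈ c, (((C.blk r ∩ Ch.blk r).card : ℝ) - 1)) / S := by
      intro c hc
      rw [← PPRaux.num_term C Ch hc]
      have hpc : p c ≠ 0 := (hp c hc).ne'
      field_simp
    rw [Finset.sum_congr rfl this, ← Finset.sum_div, PPRaux.sum_clusters,
      PPRaux.two_mul_ncard C Ch]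
  have hden : C.expect p (fun c => (c.card : ℝ) * ((c.card : ℝ) - 1 + clAvg (SDE C Ch) c) / p c)
      = 2 * ((Ch.pairs).ncard : ℝ) / S := by
    rw [Clustering.expect]
    have : ∀ c ∈ C.clusters, (p c / S) * ((c.card : ℝ) * ((c.card : ℝ) - 1 + clAvg (SDE C Ch) c) / p c)
        = (∑ r ∈ c, (((Ch.blk r).card : ℝ) - 1)) / S := by
      intro c hc
      rw [← PPRaux.den_term C Ch hc]
      have hpc : p c ≠ 0 := (hp c hc).ne'
      field_simp
    rw [Finset.sum_congr rfl this, ← Finset.sum_div, PPRaux.sum_clusters]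
    have h2 : ∑ r : R, (((Ch.blk r).card : ℝ) - 1)
        = ∑ r : R, (((Ch.blk r ∩ Ch.blk r).card : ℝ) - 1) := by
      simp
    have h3 := PPRaux.two_mul_ncard Ch Ch
    have h4 : (Ch.pairs ∩ Ch.pairs) = Ch.pairs := Set.inter_self _
    rw [h2, ← h3, h4]
  rw [hnum, hden]
  field_simp
end

section
/- Let c be a random cluster drawn from the true clustering 𝒞 with probability proportional to positive weights p_c, and let β > 0. Then the pairwise F-score satisfies F_β = E[|c|(|c|−1−UCE(c))/p_c] / E[|c|(|c|−1 + SDE(c)/(1+β²))/p_c], provided both precision and recall are well defined and positive. -/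
open Finset Filter Topology

/-- Pairwise precision `P = |T ∩ P| / |P|`. -/
noncomputable def pairwisePrecision {R : Type*} [Fintype R] [DecidableEq R]
    (C Ch : Clustering R) : ℝ :=
  ((C.pairs ∩ Ch.pairs).ncard : ℝ) / (Ch.pairs.ncard : ℝ)

/-- Pairwise recall `R = |T ∩ P| / |T|`. -/
noncomputable def pairwiseRecall {R : Type*} [Fintype R] [DecidableEq R]
    (C Ch : Clustering R) : ℝ :=
  ((C.pairs ∩ Ch.pairs).ncard : ℝ) / (C.pairs.ncard : ℝ)

/-!
Twice the number of pairs of a partition is `∑ r, (|block of r| - 1)` (the handshake lemma for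
the graph "distinct and in the same block"), and the pairs common to `𝒞` and `𝒞̂` are the pairs of
their meet. Weighting a cluster average by `|c|` and summing over the clusters gives back a sum over
records, so with `Z = ∑ p_c` the two expectations are `2|𝒯 ∩ 𝒫| / Z` and
`(2|𝒯| + (2|𝒫| - 2|𝒯|) / (1 + β²)) / Z`, whose ratio is the F-score.
-/

namespace Clustering

variable {R : Type*} [Fintype R] [DecidableEq R] (C D : Clustering R)

theorem mem_blk_comm {a b : R} : a ∈ C.blk b ↔ b ∈ C.blk a :=
  ⟨fun h => C.blk_eq b a h ▸ C.mem_blk b, fun h => C.blk_eq a b h ▸ C.mem_blk a⟩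

def inf : Clustering R where
  blk r := C.blk r ∩ D.blk r
  mem_blk r := mem_inter.mpr ⟨C.mem_blk r, D.mem_blk r⟩
  blk_eq r r' h := by
    rw [mem_inter] at h
    rw [C.blk_eq r r' h.1, D.blk_eq r r' h.2]

theorem pairs_inf : (C.inf D).pairs = C.pairs ∩ D.pairs := by
  ext s
  simp only [pairs, inf, Set.mem_inter_iff, Set.mem_ofPred_eq, mem_inter]
  constructor
  · rintro ⟨hs, h⟩
    exact ⟨⟨hs, fun a b hab => (h a b hab).1⟩, ⟨hs, fun a b hab => (h a b hab).2⟩⟩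
  · rintro ⟨⟨hs, hC⟩, ⟨-, hD⟩⟩
    exact ⟨hs, fun a b hab => ⟨hC a b hab, hD a b hab⟩⟩

def graph : SimpleGraph R where
  Adj a b := a ≠ b ∧ a ∈ C.blk b
  symm := ⟨fun _ _ h => ⟨h.1.symm, C.mem_blk_comm.mp h.2⟩⟩
  loopless := ⟨fun _ h => h.1 rfl⟩

theorem pairs_eq_edgeSet : C.pairs = C.graph.edgeSet := by
  ext s
  induction s using Sym2.ind with
  | _ a b =>
    simp only [pairs, Set.mem_ofPred_eq, SimpleGraph.mem_edgeSet, graph, Sym2.mk_isDiag_iff,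
      Sym2.eq_iff]
    constructor
    · rintro ⟨hab, h⟩
      exact ⟨hab, h a b (Or.inl ⟨rfl, rfl⟩)⟩
    · rintro ⟨hab, h⟩
      refine ⟨hab, fun x y hxy => ?_⟩
      rcases hxy with ⟨rfl, rfl⟩ | ⟨rfl, rfl⟩
      exacts [h, C.mem_blk_comm.mp h]

theorem degree_graph (r : R) [Fintype (C.graph.neighborSet r)] :
    C.graph.degree r = (C.blk r).card - 1 := by
  rw [← SimpleGraph.card_neighborFinset_eq_degree, ← card_erase_of_mem (C.mem_blk r)]
  congr 1
  ext a
  rw [SimpleGraph.mem_neighborFinset, mem_erase]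
  exact and_congr ne_comm C.mem_blk_comm

theorem two_mul_ncard_pairs : 2 * (C.pairs.ncard : ℝ) = ∑ r, (((C.blk r).card : ℝ) - 1) := by
  classical
  have handshake := C.graph.sum_degrees_eq_twice_card_edges
  rw [← Set.ncard_coe_finset, SimpleGraph.coe_edgeFinset, ← pairs_eq_edgeSet] at handshake
  simp only [degree_graph] at handshake
  rw [← Nat.cast_ofNat, ← Nat.cast_mul, ← handshake, Nat.cast_sum]
  refine sum_congr rfl fun r _ => ?_
  rw [Nat.cast_sub (card_pos.mpr ⟨r, C.mem_blk r⟩), Nat.cast_one]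

theorem filter_blk_eq (r : R) : ({x | C.blk x = C.blk r} : Finset R) = C.blk r := by
  ext x
  simp only [mem_filter, mem_univ, true_and]
  exact ⟨fun h => h ▸ C.mem_blk x, fun h => C.blk_eq r x h⟩

theorem sum_clusters_card_mul (f : Finset R → ℝ) :
    ∑ c ∈ C.clusters, (c.card : ℝ) * f c = ∑ r, f (C.blk r) := by
  refine sum_image' _ fun r _ => ?_
  rw [sum_congr rfl fun x hx => congrArg f (mem_filter.mp hx).2, sum_const, nsmul_eq_mul,
    filter_blk_eq]

theorem sum_clAvg_blk (E : R → ℝ) : ∑ r, clAvg E (C.blk r) = ∑ r, E r := by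
  rw [← sum_clusters_card_mul]
  refine sum_image' _ fun r _ => ?_
  rw [filter_blk_eq, clAvg, ← mul_assoc, mul_one_div_cancel, one_mul]
  exact Nat.cast_ne_zero.mpr (card_ne_zero_of_mem (C.mem_blk r))

theorem expect_div_div_expect_div {p : Finset R → ℝ} (hp : ∀ c ∈ C.clusters, 0 < p c)
    (hC : C.clusters.Nonempty) (f g : Finset R → ℝ) :
    C.expect p (fun c => f c / p c) / C.expect p (fun c => g c / p c) =
      (∑ c ∈ C.clusters, f c) / ∑ c ∈ C.clusters, g c := by
  have expect_div (h : Finset R → ℝ) :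
      C.expect p (fun c => h c / p c) = (∑ c ∈ C.clusters, h c) / ∑ c ∈ C.clusters, p c := by
    rw [expect, sum_div]
    exact sum_congr rfl fun c hc => by field_simp [(hp c hc).ne']
  rw [expect_div, expect_div, div_div_div_cancel_right₀ (sum_pos hp hC).ne']

end Clustering

section Metrics

variable {R : Type*} [Fintype R] [DecidableEq R] (C Ch : Clustering R)

theorem UCE_eq_card_sub_card_inf (r : R) :
    UCE C Ch r = ((C.blk r).card : ℝ) - ((C.inf Ch).blk r).card := by
  rw [UCE, eq_sub_iff_add_eq, add_comm]
  exact_mod_cast card_inter_add_card_sdiff (C.blk r) (Ch.blk r)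

theorem sum_card_mul_sub_clAvg_UCE :
    ∑ c ∈ C.clusters, (c.card : ℝ) * ((c.card : ℝ) - 1 - clAvg (UCE C Ch) c) =
      2 * ((C.pairs ∩ Ch.pairs).ncard : ℝ) := by
  rw [C.sum_clusters_card_mul, sum_sub_distrib, C.sum_clAvg_blk, ← Clustering.pairs_inf,
    Clustering.two_mul_ncard_pairs, ← sum_sub_distrib]
  exact sum_congr rfl fun r _ => by rw [UCE_eq_card_sub_card_inf]; ring

theorem sum_card_mul_add_clAvg_SDE (a : ℝ) :
    ∑ c ∈ C.clusters, (c.card : ℝ) * ((c.card : ℝ) - 1 + clAvg (SDE C Ch) c / a) =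
      2 * (C.pairs.ncard : ℝ) + (2 * (Ch.pairs.ncard : ℝ) - 2 * C.pairs.ncard) / a := by
  rw [C.sum_clusters_card_mul, sum_add_distrib, ← sum_div, C.sum_clAvg_blk,
    Clustering.two_mul_ncard_pairs, Clustering.two_mul_ncard_pairs, ← sum_sub_distrib]
  simp only [SDE, sub_sub_sub_cancel_right]

end Metrics

theorem pairwise_fscore_representation_general
    {R : Type*} [Fintype R] [DecidableEq R]
    (C Ch : Clustering R) (p : Finset R → ℝ)
    (hp : ∀ c ∈ C.clusters, 0 < p c)
    (β : ℝ)
    (hPpos : 0 < pairwisePrecision C Ch) (hRpos : 0 < pairwiseRecall C Ch) :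
    (((pairwisePrecision C Ch)⁻¹ + β ^ 2 * (pairwiseRecall C Ch)⁻¹) / (1 + β ^ 2))⁻¹ =
      C.expect p (fun c => (c.card : ℝ) * ((c.card : ℝ) - 1 - clAvg (UCE C Ch) c) / p c) /
        C.expect p
          (fun c => (c.card : ℝ) * ((c.card : ℝ) - 1 + clAvg (SDE C Ch) c / (1 + β ^ 2)) / p c) := by
  obtain ⟨-, hP⟩ := div_ne_zero_iff.mp hPpos.ne'
  obtain ⟨-, hT⟩ := div_ne_zero_iff.mp hRpos.ne'
  have : Nonempty R := ⟨(Set.nonempty_of_ncard_ne_zero (Nat.cast_ne_zero.mp hT)).some.out.1⟩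
  have hPT : (Ch.pairs.ncard : ℝ) + β ^ 2 * C.pairs.ncard ≠ 0 := by positivity
  rw [C.expect_div_div_expect_div hp (univ_nonempty.image C.blk), sum_card_mul_sub_clAvg_UCE,
    sum_card_mul_add_clAvg_SDE, pairwisePrecision, pairwiseRecall]
  field_simp
  rw [eq_div_iff (by contrapose! hPT; linear_combination hPT)]
  ring

/-- Lemma 2: representation of the pairwise F-score. -/
theorem pairwise_fscore_representation
    {R : Type*} [Fintype R] [DecidableEq R]
    (C Ch : Clustering R) (p : Finset R → ℝ)
    (hp : ∀ c ∈ C.clusters, 0 < p c)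
    (β : ℝ) (hβ : 0 < β)
    (hPpos : 0 < pairwisePrecision C Ch) (hRpos : 0 < pairwiseRecall C Ch) :
    (((pairwisePrecision C Ch)⁻¹ + β ^ 2 * (pairwiseRecall C Ch)⁻¹) / (1 + β ^ 2))⁻¹ =
      C.expect p (fun c => (c.card : ℝ) * ((c.card : ℝ) - 1 - clAvg (UCE C Ch) c) / p c) /
        C.expect p
          (fun c => (c.card : ℝ) * ((c.card : ℝ) - 1 + clAvg (SDE C Ch) c / (1 + β ^ 2)) / p c) :=
  pairwise_fscore_representation_general C Ch p hp β hPpos hRpos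
end

section
/- Let c be a random cluster drawn from the true clustering 𝒞 with probability proportional to positive weights p_c. Then the cluster precision satisfies cP = N·E[CI(c)/p_c] / (|𝒞̂|·E[|c|/p_c]), where CI(c) is the indicator that the block c of 𝒞 is also a block of 𝒞̂. -/
open Finset Filter Topology

namespace Clustering

variable {R : Type*} [Fintype R] [DecidableEq R] (C : Clustering R)

theorem mem_blk_iff {r r' : R} : r' ∈ C.blk r ↔ C.blk r' = C.blk r :=
  ⟨C.blk_eq r r', fun h => h ▸ C.mem_blk r'⟩

theorem blk_mem_clusters (r : R) : C.blk r ∈ C.clusters :=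
  mem_image_of_mem _ (mem_univ r)

theorem clusters_eq_empty [IsEmpty R] : C.clusters = ∅ := by
  simp [clusters]

theorem clusters_nonempty [Nonempty R] : C.clusters.Nonempty :=
  ⟨_, C.blk_mem_clusters (Classical.arbitrary R)⟩

theorem sum_card_clusters : ∑ c ∈ C.clusters, #c = Fintype.card R := by
  rw [← card_univ, card_eq_sum_card_image C.blk]
  refine sum_congr rfl fun c hc => ?_
  obtain ⟨r, -, rfl⟩ := mem_image.mp hc
  congr 1
  ext r'
  simp [C.mem_blk_iff]

/-- Sampling with weights `p` and reweighting by `1 / p` undoes the bias. -/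
theorem expect_div_weight {p : Finset R → ℝ} (hp : ∀ c ∈ C.clusters, p c ≠ 0)
    (f : Finset R → ℝ) :
    C.expect p (fun c => f c / p c) = (∑ c ∈ C.clusters, f c) / ∑ c ∈ C.clusters, p c := by
  rw [expect, sum_div]
  refine sum_congr rfl fun c hc => ?_
  rw [div_mul_div_comm, mul_comm (p c), mul_div_mul_right _ _ (hp c hc)]

end Clustering

/-- Lemma 3 (cluster precision part). -/
theorem cluster_precision_representation
    {R : Type*} [Fintype R] [DecidableEq R]
    (C Ch : Clustering R) (p : Finset R → ℝ)
    (hp : ∀ c ∈ C.clusters, 0 < p c) :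
    ((C.clusters ∩ Ch.clusters).card : ℝ) / (Ch.clusters.card : ℝ) =
      (Fintype.card R : ℝ) *
          C.expect p (fun c => (if c ∈ Ch.clusters then (1 : ℝ) else 0) / p c) /
        ((Ch.clusters.card : ℝ) * C.expect p (fun c => (c.card : ℝ) / p c)) := by
  rcases isEmpty_or_nonempty R with _ | _
  · simp [C.clusters_eq_empty]
  have hp_ne : ∀ c ∈ C.clusters, p c ≠ 0 := fun c hc => (hp c hc).ne'
  have hS : 0 < ∑ c ∈ C.clusters, p c := sum_pos hp C.clusters_nonempty
  have hN : (0 : ℝ) < Fintype.card R := by exact_mod_cast Fintype.card_pos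
  have hCh : (0 : ℝ) < #Ch.clusters := by exact_mod_cast Ch.clusters_nonempty.card_pos
  rw [C.expect_div_weight hp_ne, C.expect_div_weight hp_ne, sum_boole, filter_mem_eq_inter,
    ← Nat.cast_sum, C.sum_card_clusters]
  field_simp
end

section
/- Let c be a random cluster drawn from the true clustering 𝒞 with probability proportional to positive weights p_c, and let β > 0. Then the cluster F-score satisfies cF_β = E[N(1+β²)·CI(c)/p_c] / E[(Nβ² + |𝒞̂|·|c|)/p_c], where CI(c) is the indicator that the block c of 𝒞 is also a block of 𝒞̂, provided cluster precision and cluster recall are positive. -/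
open Finset Filter Topology

/-- Cluster precision `cP = |𝒞 ∩ 𝒞̂| / |𝒞̂|`. -/
noncomputable def clusterPrecision {R : Type*} [Fintype R] [DecidableEq R]
    (C Ch : Clustering R) : ℝ :=
  ((C.clusters ∩ Ch.clusters).card : ℝ) / (Ch.clusters.card : ℝ)

/-- Cluster recall `cR = |𝒞 ∩ 𝒞̂| / |𝒞|`. -/
noncomputable def clusterRecall {R : Type*} [Fintype R] [DecidableEq R]
    (C Ch : Clustering R) : ℝ :=
  ((C.clusters ∩ Ch.clusters).card : ℝ) / (C.clusters.card : ℝ)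

lemma Clustering.sum_card_clusters_s5 {R : Type*} [Fintype R] [DecidableEq R]
    (C : Clustering R) : ∑ c ∈ C.clusters, c.card = Fintype.card R := by
  classical
  have h := Finset.card_eq_sum_card_image C.blk (Finset.univ : Finset R)
  rw [Finset.card_univ] at h
  rw [Clustering.clusters]
  rw [h]
  refine Finset.sum_congr rfl ?_
  intro c hc
  obtain ⟨r0, -, rfl⟩ := Finset.mem_image.mp hc
  congr 1
  ext r
  simp only [Finset.mem_filter, Finset.mem_univ, true_and]
  constructor
  · intro hr; exact C.blk_eq r0 r hr
  · intro hr; rw [← hr]; exact C.mem_blk r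

/-- Lemma 3 (cluster F-score part). -/
theorem cluster_fscore_representation
    {R : Type*} [Fintype R] [DecidableEq R]
    (C Ch : Clustering R) (p : Finset R → ℝ)
    (hp : ∀ c ∈ C.clusters, 0 < p c)
    (β : ℝ) (hβ : 0 < β)
    (hPpos : 0 < clusterPrecision C Ch) (hRpos : 0 < clusterRecall C Ch) :
    (((clusterPrecision C Ch)⁻¹ + β ^ 2 * (clusterRecall C Ch)⁻¹) / (1 + β ^ 2))⁻¹ =
      C.expect p
          (fun c => (Fintype.card R : ℝ) * (1 + β ^ 2) *
            (if c ∈ Ch.clusters then (1 : ℝ) else 0) / p c) /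
        C.expect p
          (fun c => ((Fintype.card R : ℝ) * β ^ 2 + (Ch.clusters.card : ℝ) * (c.card : ℝ)) / p c) := by
  classical
  set N : ℝ := (Fintype.card R : ℝ) with hN
  set I : ℝ := ((C.clusters ∩ Ch.clusters).card : ℝ) with hI
  set K : ℝ := ((C.clusters).card : ℝ) with hK
  set Kh : ℝ := ((Ch.clusters).card : ℝ) with hKh
  have hIpos : 0 < I := by
    by_contra h
    push_neg at h
    have : I = 0 := le_antisymm h (by positivity)
    rw [clusterPrecision] at hPpos
    rw [← hI, this] at hPpos
    simp at hPpos
  have hKpos : 0 < K := by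
    rw [clusterRecall] at hRpos
    rw [← hI, ← hK] at hRpos
    by_contra h
    push_neg at h
    have : K = 0 := le_antisymm h (by positivity)
    rw [this, div_zero] at hRpos
    exact lt_irrefl 0 hRpos
  have hKhpos : 0 < Kh := by
    rw [clusterPrecision] at hPpos
    rw [← hI, ← hKh] at hPpos
    by_contra h
    push_neg at h
    have : Kh = 0 := le_antisymm h (by positivity)
    rw [this, div_zero] at hPpos
    exact lt_irrefl 0 hPpos
  have hne : C.clusters.Nonempty := by
    rw [← Finset.card_pos]
    have := hKpos
    rw [hK] at this
    exact_mod_cast this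
  have hNpos : 0 < N := by
    obtain ⟨c, hc⟩ := hne
    obtain ⟨r, -, -⟩ := Finset.mem_image.mp hc
    rw [hN]
    have : 0 < Fintype.card R := Fintype.card_pos_iff.mpr ⟨r⟩
    exact_mod_cast this
  have hcardsum : ∑ c ∈ C.clusters, (c.card : ℝ) = N := by
    rw [hN, ← C.sum_card_clusters_s5]
    push_cast
    rfl
  set S : ℝ := ∑ c' ∈ C.clusters, p c' with hS
  have hSpos : 0 < S := Finset.sum_pos hp hne
  have hβ2 : (0:ℝ) < 1 + β ^ 2 := by positivity
  have hNum : C.expect p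
      (fun c => N * (1 + β ^ 2) * (if c ∈ Ch.clusters then (1 : ℝ) else 0) / p c)
      = N * (1 + β ^ 2) * I / S := by
    rw [Clustering.expect, ← hS]
    have : ∀ c ∈ C.clusters,
        (p c / S) * (N * (1 + β ^ 2) * (if c ∈ Ch.clusters then (1 : ℝ) else 0) / p c)
        = (N * (1 + β ^ 2) / S) * (if c ∈ Ch.clusters then (1 : ℝ) else 0) := by
      intro c hc
      have hpne : p c ≠ 0 := (hp c hc).ne'
      field_simp
    rw [Finset.sum_congr rfl this, ← Finset.mul_sum]
    have hsum : ∑ c ∈ C.clusters, (if c ∈ Ch.clusters then (1 : ℝ) else 0) = I := by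
      rw [Finset.sum_boole, hI, Finset.filter_mem_eq_inter]
    rw [hsum]
    ring
  have hDen : C.expect p (fun c => (N * β ^ 2 + Kh * (c.card : ℝ)) / p c)
      = (K * (N * β ^ 2) + Kh * N) / S := by
    rw [Clustering.expect, ← hS]
    have : ∀ c ∈ C.clusters,
        (p c / S) * ((N * β ^ 2 + Kh * (c.card : ℝ)) / p c)
        = (N * β ^ 2) / S + (Kh / S) * (c.card : ℝ) := by
      intro c hc
      have hpne : p c ≠ 0 := (hp c hc).ne'
      field_simp
    rw [Finset.sum_congr rfl this, Finset.sum_add_distrib, Finset.sum_const,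
      ← Finset.mul_sum, hcardsum, nsmul_eq_mul, ← hK]
    field_simp
  rw [hNum, hDen, clusterPrecision, clusterRecall, ← hI, ← hK, ← hKh]
  rw [inv_div, inv_div]
  have h1 := hIpos.ne'
  have h2 := hKpos.ne'
  have h3 := hKhpos.ne'
  have h4 := hNpos.ne'
  have h5 := hSpos.ne'
  have h6 := hβ2.ne'
  field_simp
  ring
end

section
/- Let c be a random cluster drawn from the true clustering 𝒞 with probability proportional to positive weights p_c. Then the b-cubed recall satisfies R_{B³} = E[(1 − RUCE(c))/p_c] / E[1/p_c]. -/
open Finset Filter Topology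

/-! Every record of a true cluster `c` has `|c(r) ∩ ĉ(r)| / |c(r)| = 1 - RUCE(r)`, so the inner
average of the b-cubed recall is `1 - RUCE(c)`. Weighting each cluster by `p_c` and each summand
by `1 / p_c` cancels, so both expectations are plain sums over `𝒞` divided by `Σ p_c`, and their
ratio is the uniform average over the clusters. -/

namespace Clustering

variable {R : Type*} [Fintype R] [DecidableEq R] (C : Clustering R)

theorem blk_nonempty (r : R) : (C.blk r).Nonempty := ⟨r, C.mem_blk r⟩

theorem nonempty_of_mem_clusters {c : Finset R} (hc : c ∈ C.clusters) : c.Nonempty := by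
  obtain ⟨r, -, rfl⟩ := Finset.mem_image.mp hc
  exact C.blk_nonempty r

theorem expect_div_eq_sum_div {p : Finset R → ℝ} (hp : ∀ c ∈ C.clusters, p c ≠ 0)
    (g : Finset R → ℝ) :
    C.expect p (fun c => g c / p c) = (∑ c ∈ C.clusters, g c) / ∑ c ∈ C.clusters, p c := by
  rw [expect, sum_div]
  refine sum_congr rfl fun c hc => ?_
  field_simp [hp c hc]

end Clustering

theorem Finset.card_inter_div_card_eq_one_sub {α : Type*} [DecidableEq α] {s : Finset α}
    (hs : s.Nonempty) (t : Finset α) :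
    ((s ∩ t).card : ℝ) / s.card = 1 - ((s \ t).card : ℝ) / s.card := by
  have hs' : (s.card : ℝ) ≠ 0 := by exact_mod_cast hs.card_pos.ne'
  rw [eq_sub_iff_add_eq, ← add_div, ← Nat.cast_add, card_inter_add_card_sdiff, div_self hs']

theorem clAvg_one_sub {R : Type*} (E : R → ℝ) {c : Finset R} (hc : c.Nonempty) :
    clAvg (fun r => 1 - E r) c = 1 - clAvg E c := by
  have hc' : (c.card : ℝ) ≠ 0 := by exact_mod_cast hc.card_pos.ne'
  simp only [clAvg, sum_sub_distrib, sum_const, nsmul_one]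
  field_simp

section Metrics

variable {R : Type*} [Fintype R] [DecidableEq R]

theorem one_sub_RUCE (C Ch : Clustering R) (r : R) :
    1 - RUCE C Ch r = ((C.blk r ∩ Ch.blk r).card : ℝ) / (C.blk r).card :=
  (card_inter_div_card_eq_one_sub (C.blk_nonempty r) _).symm

theorem one_sub_clAvg_RUCE (C Ch : Clustering R) {c : Finset R} (hc : c ∈ C.clusters) :
    1 - clAvg (RUCE C Ch) c =
      (1 / (c.card : ℝ)) * ∑ r ∈ c, ((C.blk r ∩ Ch.blk r).card : ℝ) / (C.blk r).card := by
  rw [← clAvg_one_sub _ (C.nonempty_of_mem_clusters hc)]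
  simp only [clAvg, one_sub_RUCE]

end Metrics

/-- Lemma 4 (b-cubed recall part). -/
theorem bcubed_recall_representation
    {R : Type*} [Fintype R] [DecidableEq R]
    (C Ch : Clustering R) (p : Finset R → ℝ)
    (hp : ∀ c ∈ C.clusters, 0 < p c) :
    (1 / (C.clusters.card : ℝ)) *
        ∑ c ∈ C.clusters, (1 / (c.card : ℝ)) *
          ∑ r ∈ c, ((C.blk r ∩ Ch.blk r).card : ℝ) / ((C.blk r).card : ℝ) =
      C.expect p (fun c => (1 - clAvg (RUCE C Ch) c) / p c) /
        C.expect p (fun c => 1 / p c) := by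
  have hp₀ : ∀ c ∈ C.clusters, p c ≠ 0 := fun c hc => (hp c hc).ne'
  rw [C.expect_div_eq_sum_div hp₀, C.expect_div_eq_sum_div hp₀ (fun _ => 1), sum_const,
    nsmul_one, sum_congr rfl fun c hc => (one_sub_clAvg_RUCE C Ch hc).symm]
  rcases C.clusters.eq_empty_or_nonempty with hempty | hne
  · simp [hempty]
  rw [div_div_div_cancel_right₀ (sum_pos hp hne).ne', one_div_mul_eq_div]
end

section
/- The number of correctly predicted matched pairs satisfies |𝒯 ∩ 𝒫| = (1/2)·Σ_{c∈𝒞} |c|·(|c| − 1 − UCE(c)). -/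
open Finset Filter Topology

section Aux
variable {R : Type*} [Fintype R] [DecidableEq R]

lemma Clustering.mem_blk_symm (C : Clustering R) {a b : R} (h : a ∈ C.blk b) :
    b ∈ C.blk a := by
  rw [C.blk_eq b a h]; exact C.mem_blk b

lemma Clustering.filter_blk_eq_s10 (C : Clustering R) {c : Finset R} (hc : c ∈ C.clusters) :
    Finset.univ.filter (fun r => C.blk r = c) = c := by
  obtain ⟨r0, -, rfl⟩ := Finset.mem_image.mp hc
  ext r
  simp only [Finset.mem_filter, Finset.mem_univ, true_and]
  exact ⟨fun h => h ▸ C.mem_blk r, fun h => C.blk_eq r0 r h⟩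

end Aux

/-- Number of correctly predicted matched pairs. -/
theorem num_correct_pairs
    {R : Type*} [Fintype R] [DecidableEq R]
    (C Ch : Clustering R) :
    ((C.pairs ∩ Ch.pairs).ncard : ℝ) =
      (1 / 2) * ∑ c ∈ C.clusters,
        (c.card : ℝ) * ((c.card : ℝ) - 1 - clAvg (UCE C Ch) c) := by
  classical
  -- The finset of correctly predicted pairs
  set P : Finset (Sym2 R) := Finset.univ.filter
    (fun s => ¬ s.IsDiag ∧ ∀ a b : R, s = s(a, b) → a ∈ C.blk b ∧ a ∈ Ch.blk b) with hPdef
  have hset : C.pairs ∩ Ch.pairs = ↑P := by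
    ext s
    simp only [Clustering.pairs, Set.mem_inter_iff, Set.mem_setOf_eq, hPdef,
      Finset.coe_filter, Finset.mem_univ, true_and, Set.mem_setOf_eq]
    constructor
    · rintro ⟨⟨h1, h2⟩, _, h4⟩
      exact ⟨h1, fun a b hab => ⟨h2 a b hab, h4 a b hab⟩⟩
    · rintro ⟨h1, h2⟩
      exact ⟨⟨h1, fun a b hab => (h2 a b hab).1⟩, h1, fun a b hab => (h2 a b hab).2⟩
  rw [hset, Set.ncard_coe_finset]
  -- The finset of ordered correct pairs
  set E : Finset (R × R) := Finset.univ.filter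
    (fun p : R × R => p.1 ≠ p.2 ∧ p.1 ∈ C.blk p.2 ∧ p.1 ∈ Ch.blk p.2) with hEdef
  have hmapsto : ∀ p ∈ E, Sym2.mk p.1 p.2 ∈ P := by
    rintro ⟨a, b⟩ hp
    simp only [hEdef, Finset.mem_filter, Finset.mem_univ, true_and] at hp
    obtain ⟨hne, hC, hCh⟩ := hp
    simp only [hPdef, Finset.mem_filter, Finset.mem_univ, true_and]
    refine ⟨by simpa using hne, ?_⟩
    intro x y hxy
    rw [Sym2.eq_iff] at hxy
    rcases hxy with ⟨rfl, rfl⟩ | ⟨rfl, rfl⟩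
    · exact ⟨hC, hCh⟩
    · exact ⟨C.mem_blk_symm hC, Ch.mem_blk_symm hCh⟩
  -- each fiber has two elements
  have hcardE : E.card = 2 * P.card := by
    rw [Finset.card_eq_sum_card_fiberwise hmapsto]
    rw [Finset.sum_congr rfl (fun s hs => ?_), Finset.sum_const, smul_eq_mul, mul_comm]
    induction s using Sym2.inductionOn with
    | hf a b =>
      simp only [hPdef, Finset.mem_filter, Finset.mem_univ, true_and] at hs
      obtain ⟨hdiag, hall⟩ := hs
      have hne : a ≠ b := by simpa using hdiag
      have h1 := hall a b rfl
      have h2 := hall b a (Sym2.eq_swap)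
      have : E.filter (fun p => Sym2.mk p.1 p.2 = s(a, b)) = {(a, b), (b, a)} := by
        ext ⟨x, y⟩
        simp only [Finset.mem_filter, hEdef, Finset.mem_univ, true_and,
          Finset.mem_insert, Finset.mem_singleton, Prod.mk.injEq, Sym2.eq_iff]
        constructor
        · rintro ⟨-, h⟩
          rcases h with ⟨rfl, rfl⟩ | ⟨rfl, rfl⟩
          · exact Or.inl ⟨rfl, rfl⟩
          · exact Or.inr ⟨rfl, rfl⟩
        · rintro (⟨rfl, rfl⟩ | ⟨rfl, rfl⟩)
          · exact ⟨⟨hne, h1.1, h1.2⟩, Or.inl ⟨rfl, rfl⟩⟩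
          · exact ⟨⟨hne.symm, h2.1, h2.2⟩, Or.inr ⟨rfl, rfl⟩⟩
      rw [this]
      rw [Finset.card_insert_of_notMem (by simp [hne]), Finset.card_singleton]
  -- fiberwise over second coordinate
  have hfiber2 : ∀ b : R, E.filter (fun p => p.2 = b) =
      (((C.blk b ∩ Ch.blk b).erase b).map ⟨fun a => (a, b), fun x y h => (Prod.mk.injEq _ _ _ _ ▸ h).1⟩) := by
    intro b
    ext ⟨x, y⟩
    simp only [Finset.mem_filter, hEdef, Finset.mem_univ, true_and, Finset.mem_map,
      Finset.mem_erase, Finset.mem_inter, Function.Embedding.coeFn_mk, Prod.mk.injEq]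
    constructor
    · rintro ⟨⟨hne, hC, hCh⟩, rfl⟩
      exact ⟨x, ⟨hne, hC, hCh⟩, rfl⟩
    · rintro ⟨a, ⟨hne, hC, hCh⟩, h⟩
      obtain ⟨rfl, rfl⟩ := Prod.mk.inj h
      exact ⟨⟨hne, hC, hCh⟩, rfl⟩
  have hcardE2 : (E.card : ℝ) = ∑ b : R, (((C.blk b ∩ Ch.blk b).card : ℝ) - 1) := by
    have h1 : E.card = ∑ b : R, (E.filter (fun p => p.2 = b)).card :=
      Finset.card_eq_sum_card_fiberwise (fun p _ => Finset.mem_univ p.2)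
    rw [h1]
    push_cast
    refine Finset.sum_congr rfl (fun b _ => ?_)
    rw [hfiber2 b, Finset.card_map, Finset.card_erase_of_mem (by
      exact Finset.mem_inter.mpr ⟨C.mem_blk b, Ch.mem_blk b⟩)]
    have hpos : 1 ≤ (C.blk b ∩ Ch.blk b).card :=
      Finset.card_pos.mpr ⟨b, Finset.mem_inter.mpr ⟨C.mem_blk b, Ch.mem_blk b⟩⟩
    push_cast [Nat.cast_sub hpos]
    ring
  -- now the RHS
  have hRHS : ∑ c ∈ C.clusters, (c.card : ℝ) * ((c.card : ℝ) - 1 - clAvg (UCE C Ch) c)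
      = ∑ b : R, (((C.blk b ∩ Ch.blk b).card : ℝ) - 1) := by
    have step1 : ∀ c ∈ C.clusters,
        (c.card : ℝ) * ((c.card : ℝ) - 1 - clAvg (UCE C Ch) c)
        = ∑ r ∈ c, (((C.blk r ∩ Ch.blk r).card : ℝ) - 1) := by
      intro c hc
      obtain ⟨r0, -, rfl⟩ := Finset.mem_image.mp hc
      have hne : (C.blk r0).Nonempty := ⟨r0, C.mem_blk r0⟩
      have hcard : ((C.blk r0).card : ℝ) ≠ 0 := by
        exact_mod_cast Finset.card_ne_zero_of_mem (C.mem_blk r0)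
      have key : ∀ r ∈ C.blk r0, (((C.blk r ∩ Ch.blk r).card : ℝ) - 1)
          = ((C.blk r0).card : ℝ) - 1 - UCE C Ch r := by
        intro r hr
        have hblk : C.blk r = C.blk r0 := C.blk_eq r0 r hr
        have h := Finset.card_inter_add_card_sdiff (C.blk r) (Ch.blk r)
        have h' : ((C.blk r ∩ Ch.blk r).card : ℝ) + ((C.blk r \ Ch.blk r).card : ℝ)
            = ((C.blk r).card : ℝ) := by exact_mod_cast h
        rw [UCE, ← hblk]
        linarith
      rw [Finset.sum_congr rfl key]
      have hA : ((C.blk r0).card : ℝ) * clAvg (UCE C Ch) (C.blk r0)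
          = ∑ r ∈ C.blk r0, UCE C Ch r := by
        rw [clAvg]; field_simp
      rw [mul_sub, hA, Finset.sum_sub_distrib, Finset.sum_const, nsmul_eq_mul]
    rw [Finset.sum_congr rfl step1]
    have hmaps : ∀ r : R, r ∈ (Finset.univ : Finset R) → C.blk r ∈ C.clusters :=
      fun r _ => Finset.mem_image_of_mem C.blk (Finset.mem_univ r)
    rw [← Finset.sum_fiberwise_of_maps_to hmaps
      (fun r => ((C.blk r ∩ Ch.blk r).card : ℝ) - 1)]
    refine Finset.sum_congr rfl (fun c hc => ?_)
    rw [C.filter_blk_eq_s10 hc]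
  rw [hRHS, ← hcardE2, hcardE]
  push_cast
  ring
end

section
/- Let c be a random cluster drawn from the clustering 𝒞 with probability proportional to positive weights p_c. Then the matching rate satisfies R_m = E[|c|·𝟙(|c| > 1)/p_c] / E[|c|/p_c]. -/
open Finset Filter Topology

private lemma sum_blk_aux {R : Type*} [Fintype R] [DecidableEq R] (C : Clustering R)
    (h : Finset R → ℝ) :
    ∑ r : R, h (C.blk r) = ∑ c ∈ C.clusters, (c.card : ℝ) * h c := by
  rw [Finset.sum_comp (s := Finset.univ) h C.blk]
  refine Finset.sum_congr rfl fun c hc => ?_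
  have hfil : Finset.univ.filter (fun r => C.blk r = c) = c := by
    obtain ⟨a, _, rfl⟩ := Finset.mem_image.mp hc
    ext r
    simp only [Finset.mem_filter, Finset.mem_univ, true_and]
    constructor
    · intro he; rw [← he]; exact C.mem_blk r
    · intro hr; exact C.blk_eq a r hr
  rw [hfil, nsmul_eq_mul]

/-- Representation of the matching rate as a ratio of expectations. -/
theorem matching_rate_representation
    {R : Type*} [Fintype R] [DecidableEq R]
    (C : Clustering R) (p : Finset R → ℝ)
    (hp : ∀ c ∈ C.clusters, 0 < p c) :
    (1 / (Fintype.card R : ℝ)) *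
        ∑ r : R, (if 1 < (C.blk r).card then (1 : ℝ) else 0) =
      C.expect p (fun c => (c.card : ℝ) * (if 1 < c.card then (1 : ℝ) else 0) / p c) /
        C.expect p (fun c => (c.card : ℝ) / p c) := by

  classical
  set S : ℝ := ∑ c' ∈ C.clusters, p c' with hS
  have hnum : ∑ r : R, (if 1 < (C.blk r).card then (1 : ℝ) else 0) =
      ∑ c ∈ C.clusters, (c.card : ℝ) * (if 1 < c.card then (1 : ℝ) else 0) :=
    sum_blk_aux C (fun c => if 1 < c.card then (1 : ℝ) else 0)
  have hcard : (Fintype.card R : ℝ) = ∑ c ∈ C.clusters, (c.card : ℝ) := by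
    have := sum_blk_aux C (fun _ => (1 : ℝ))
    simpa using this
  have hE1 : C.expect p (fun c => (c.card : ℝ) * (if 1 < c.card then (1 : ℝ) else 0) / p c) =
      (∑ c ∈ C.clusters, (c.card : ℝ) * (if 1 < c.card then (1 : ℝ) else 0)) / S := by
    unfold Clustering.expect
    rw [Finset.sum_div]
    refine Finset.sum_congr rfl fun c hc => ?_
    have hpc := (hp c hc).ne'
    rw [div_mul_div_comm, mul_comm (p c), mul_div_mul_right _ _ hpc]
  have hE2 : C.expect p (fun c => (c.card : ℝ) / p c) =
      (∑ c ∈ C.clusters, (c.card : ℝ)) / S := by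
    unfold Clustering.expect
    rw [Finset.sum_div]
    refine Finset.sum_congr rfl fun c hc => ?_
    have hpc := (hp c hc).ne'
    rw [div_mul_div_comm, mul_comm (p c), mul_div_mul_right _ _ hpc]
  rw [hnum, hE1, hE2, hcard]
  rcases eq_or_ne S 0 with h0 | h0
  · have hcl : C.clusters = ∅ := by
      by_contra hne
      obtain ⟨c, hc⟩ := Finset.nonempty_iff_ne_empty.mpr hne
      have hpos : 0 < S := Finset.sum_pos' (fun c' hc' => (hp c' hc').le) ⟨c, hc, hp c hc⟩
      exact hpos.ne' h0
    simp [hcl]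
  · have hclne : C.clusters.Nonempty := by
      rw [Finset.nonempty_iff_ne_empty]
      intro he; exact h0 (by simp [hS, he])
    have hz : 0 < ∑ c ∈ C.clusters, (c.card : ℝ) := by
      obtain ⟨c, hc⟩ := hclne
      refine Finset.sum_pos' (fun c' _ => by positivity) ⟨c, hc, ?_⟩
      obtain ⟨a, _, rfl⟩ := Finset.mem_image.mp hc
      have := C.mem_blk a
      have : 0 < (C.blk a).card := Finset.card_pos.mpr ⟨a, this⟩
      exact_mod_cast this
    rw [div_div_div_eq, mul_comm S (∑ c ∈ C.clusters, (c.card : ℝ)),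
      mul_div_mul_right _ _ h0, one_div, inv_mul_eq_div]
end
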